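/- arXiv:1104.4936 — 4 statements merged into one kernel-verified Lean document; each statement's English description precedes it below -/
import Mathlib

section
/- Let σ > 0, μ ∈ ℝ, q₂₁ > 0, q₁₂ > 0, and set π₂ = q₁₂/(q₁₂+q₂₁), π₁ = q₂₁/(q₁₂+q₂₁), Θ = −√(μ²+2q₂₁σ²)/σ², Δ = μ/σ². For b₁ < b₂ and any constant v ∈ ℝ, the function Π(z) = π₂ − e^{Δ(z−b₁)} · (sinh(Θ(b₂−z))/sinh(Θ(b₂−b₁))) · (π₂ − v) satisfies the ODE (σ²/2)Π''(z) − μΠ'(z) − q₂₁Π(z) = −q₁₂π₁ on [b₁,b₂], with Π(b₁) = v and Π(b₂) = π₂. -/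
/-!
With `Δ = μ / σ²`, the numbers `Δ ∓ Θ` are the two roots of the characteristic polynomial
`σ² λ² / 2 - μ λ - q₂₁`, and `exp (Δ (z - b₁)) sinh (Θ (b₂ - z))` is a combination of
`exp ((Δ ∓ Θ) z)`, so it solves the homogeneous equation. The constant `π₂` is a particular
solution because `q₂₁ π₂ = q₁₂ π₁`. The boundary values follow from `sinh 0 = 0` and from the
normalisation by `sinh (Θ (b₂ - b₁)) ≠ 0`.
-/

open Real

section ExpMulSinh

variable (Δ Θ z₀ z₁ : ℝ)

theorem hasDerivAt_exp_mul_sinh (z : ℝ) :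
    HasDerivAt (fun z => exp (Δ * (z - z₀)) * sinh (Θ * (z₁ - z)))
      (exp (Δ * (z - z₀)) * (Δ * sinh (Θ * (z₁ - z)) - Θ * cosh (Θ * (z₁ - z)))) z := by
  have hexp : HasDerivAt (fun z => exp (Δ * (z - z₀))) (exp (Δ * (z - z₀)) * Δ) z := by
    simpa using (((hasDerivAt_id z).sub_const z₀).const_mul Δ).exp
  have harg : HasDerivAt (fun z => Θ * (z₁ - z)) (-Θ) z := by
    simpa using ((hasDerivAt_id z).const_sub z₁).const_mul Θ
  exact (hexp.mul harg.sinh).congr_deriv (by ring)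

theorem hasDerivAt_exp_mul_cosh (z : ℝ) :
    HasDerivAt (fun z => exp (Δ * (z - z₀)) * cosh (Θ * (z₁ - z)))
      (exp (Δ * (z - z₀)) * (Δ * cosh (Θ * (z₁ - z)) - Θ * sinh (Θ * (z₁ - z)))) z := by
  have hexp : HasDerivAt (fun z => exp (Δ * (z - z₀))) (exp (Δ * (z - z₀)) * Δ) z := by
    simpa using (((hasDerivAt_id z).sub_const z₀).const_mul Δ).exp
  have harg : HasDerivAt (fun z => Θ * (z₁ - z)) (-Θ) z := by
    simpa using ((hasDerivAt_id z).const_sub z₁).const_mul Θ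
  exact (hexp.mul harg.cosh).congr_deriv (by ring)

theorem deriv_exp_mul_sinh :
    deriv (fun z => exp (Δ * (z - z₀)) * sinh (Θ * (z₁ - z))) =
      fun z => Δ * (exp (Δ * (z - z₀)) * sinh (Θ * (z₁ - z)))
        - Θ * (exp (Δ * (z - z₀)) * cosh (Θ * (z₁ - z))) := by
  ext z
  rw [(hasDerivAt_exp_mul_sinh Δ Θ z₀ z₁ z).deriv]
  ring

theorem deriv_deriv_exp_mul_sinh (z : ℝ) :
    deriv (deriv fun z => exp (Δ * (z - z₀)) * sinh (Θ * (z₁ - z))) z =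
      (Δ ^ 2 + Θ ^ 2) * (exp (Δ * (z - z₀)) * sinh (Θ * (z₁ - z)))
        - 2 * Δ * Θ * (exp (Δ * (z - z₀)) * cosh (Θ * (z₁ - z))) := by
  rw [deriv_exp_mul_sinh]
  exact (((hasDerivAt_exp_mul_sinh Δ Θ z₀ z₁ z).const_mul Δ).sub
    ((hasDerivAt_exp_mul_cosh Δ Θ z₀ z₁ z).const_mul Θ)).deriv.trans (by ring)

/-- The two conditions together say that `Δ - Θ` and `Δ + Θ` are roots of `a λ² + b λ + c`. -/
theorem exp_mul_sinh_ode {a b c : ℝ} (hsum : a * (Δ ^ 2 + Θ ^ 2) + b * Δ + c = 0)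
    (hcross : 2 * a * Δ + b = 0) (z : ℝ) :
    a * deriv (deriv fun z => exp (Δ * (z - z₀)) * sinh (Θ * (z₁ - z))) z
      + b * deriv (fun z => exp (Δ * (z - z₀)) * sinh (Θ * (z₁ - z))) z
      + c * (exp (Δ * (z - z₀)) * sinh (Θ * (z₁ - z))) = 0 := by
  rw [deriv_deriv_exp_mul_sinh, deriv_exp_mul_sinh]
  linear_combination (exp (Δ * (z - z₀)) * sinh (Θ * (z₁ - z))) * hsum
    - Θ * (exp (Δ * (z - z₀)) * cosh (Θ * (z₁ - z))) * hcross

end ExpMulSinh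

theorem const_sub_const_mul_ode {a b c : ℝ} {g : ℝ → ℝ}
    (hg : ∀ z, a * deriv (deriv g) z + b * deriv g z + c * g z = 0) (p K z : ℝ) :
    a * deriv (deriv fun z => p - K * g z) z + b * deriv (fun z => p - K * g z) z
      + c * (p - K * g z) = c * p := by
  simp only [deriv_const_sub', deriv_const_mul_field', deriv.fun_neg']
  linear_combination (-K) * hg z

theorem stationary_upper_interval_general (σ μ q12 q21 b₁ b₂ v : ℝ)
    (hσ : 0 < σ) (h21 : 0 < q21) (hb : b₁ < b₂) :
    let π₁ := q21 / (q12 + q21)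
    let π₂ := q12 / (q12 + q21)
    let Θ := -Real.sqrt (μ^2 + 2*q21*σ^2) / σ^2
    let Δ := μ / σ^2
    let Pf : ℝ → ℝ := fun z =>
      π₂ - Real.exp (Δ*(z - b₁)) * (Real.sinh (Θ*(b₂ - z)) / Real.sinh (Θ*(b₂ - b₁))) * (π₂ - v)
    (∀ z ∈ Set.Icc b₁ b₂,
      σ^2/2 * deriv (deriv Pf) z - μ * deriv Pf z - q21 * Pf z = -(q12 * π₁)) ∧
    Pf b₁ = v ∧ Pf b₂ = π₂ := by
  intro π₁ π₂ Θ Δ Pf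
  have hroot : 0 < √(μ ^ 2 + 2 * q21 * σ ^ 2) := sqrt_pos.mpr (by positivity)
  have hΘ : Θ < 0 := div_neg_of_neg_of_pos (neg_neg_of_pos hroot) (by positivity)
  have hD : sinh (Θ * (b₂ - b₁)) ≠ 0 :=
    sinh_ne_zero.mpr (mul_neg_of_neg_of_pos hΘ (sub_pos.mpr hb)).ne
  have hsum : σ ^ 2 / 2 * (Δ ^ 2 + Θ ^ 2) + -μ * Δ + -q21 = 0 := by
    simp only [Δ, Θ, div_pow, neg_pow_two, sq_sqrt (by positivity : 0 ≤ μ ^ 2 + 2 * q21 * σ ^ 2)]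
    field_simp
    ring
  have hcross : 2 * (σ ^ 2 / 2) * Δ + -μ = 0 := by
    simp only [Δ]
    field_simp
    ring
  have hPf : Pf = fun z =>
      π₂ - (π₂ - v) / sinh (Θ * (b₂ - b₁)) * (exp (Δ * (z - b₁)) * sinh (Θ * (b₂ - z))) := by
    funext z
    simp only [Pf]
    ring
  refine ⟨fun z _ => ?_, ?_, ?_⟩
  · have hode := const_sub_const_mul_ode (exp_mul_sinh_ode Δ Θ b₁ b₂ hsum hcross) π₂
      ((π₂ - v) / sinh (Θ * (b₂ - b₁))) z
    rw [hPf]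
    simp only [π₁, π₂] at hode ⊢
    linear_combination hode
  · simp only [Pf, sub_self, mul_zero, exp_zero, one_mul, div_self hD]
    ring
  · simp only [Pf, sub_self, mul_zero, sinh_zero, zero_div]
    ring

theorem stationary_upper_interval (σ μ q12 q21 b₁ b₂ v : ℝ)
    (hσ : 0 < σ) (h12 : 0 < q12) (h21 : 0 < q21) (hb : b₁ < b₂) :
    let π₁ := q21 / (q12 + q21)
    let π₂ := q12 / (q12 + q21)
    let Θ := -Real.sqrt (μ^2 + 2*q21*σ^2) / σ^2
    let Δ := μ / σ^2
    let Pf : ℝ → ℝ := fun z =>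
      π₂ - Real.exp (Δ*(z - b₁)) * (Real.sinh (Θ*(b₂ - z)) / Real.sinh (Θ*(b₂ - b₁))) * (π₂ - v)
    (∀ z ∈ Set.Icc b₁ b₂,
      σ^2/2 * deriv (deriv Pf) z - μ * deriv Pf z - q21 * Pf z = -(q12 * π₁)) ∧
    Pf b₁ = v ∧ Pf b₂ = π₂ :=
  stationary_upper_interval_general σ μ q12 q21 b₁ b₂ v hσ h21 hb
end

section
/- With σ > 0, μ ∈ ℝ, q₂₁ > 0, Θ = −√(μ²+2q₂₁σ²)/σ², Δ = μ/σ², and b₁ < b₂, the function H(z) = 1 − e^{Δ(z−b₁)} sinh(Θ(b₂−z))/sinh(Θ(b₂−b₁)) satisfies H(b₁) = 0, H(b₂) = 1, and H is strictly increasing on [b₁, b₂]. -/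
open Real

theorem abs_lt_sqrt_sq_add {x c : ℝ} (hc : 0 < c) : |x| < √(x ^ 2 + c) := by
  rw [← sqrt_sq_eq_abs]
  exact sqrt_lt_sqrt (sq_nonneg x) (by linarith)

/-- Writing `sinh` through `exp`, the product is half the difference of an exponential with
slope `Δ - Θ > 0` and one with slope `Δ + Θ < 0`. -/
theorem strictMono_exp_mul_sinh {Θ Δ : ℝ} (h : |Δ| < -Θ) (b₁ b₂ : ℝ) :
    StrictMono fun z => exp (Δ * (z - b₁)) * sinh (Θ * (b₂ - z)) := by
  obtain ⟨hlow, hhigh⟩ := abs_lt.mp h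
  have hrise : StrictMono fun z => exp (Δ * (z - b₁) + Θ * (b₂ - z)) :=
    exp_strictMono.comp fun x y hxy => by nlinarith
  have hfall : StrictAnti fun z => exp (Δ * (z - b₁) - Θ * (b₂ - z)) :=
    exp_strictMono.comp_strictAnti fun x y hxy => by nlinarith
  have hsplit : ∀ z, exp (Δ * (z - b₁)) * sinh (Θ * (b₂ - z)) =
      (exp (Δ * (z - b₁) + Θ * (b₂ - z)) - exp (Δ * (z - b₁) - Θ * (b₂ - z))) / 2 := by
    intro z
    rw [sinh_eq, sub_eq_add_neg _ (Θ * _), exp_add, exp_add]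
    ring
  intro x y hxy
  simp only [hsplit]
  linarith [hrise hxy, hfall hxy]

theorem jump_size_distribution (σ μ q21 b₁ b₂ : ℝ)
    (hσ : 0 < σ) (h21 : 0 < q21) (hb : b₁ < b₂) :
    let Θ := -Real.sqrt (μ^2 + 2*q21*σ^2) / σ^2
    let Δ := μ / σ^2
    let H : ℝ → ℝ := fun z =>
      1 - Real.exp (Δ*(z - b₁)) * (Real.sinh (Θ*(b₂ - z)) / Real.sinh (Θ*(b₂ - b₁)))
    H b₁ = 0 ∧ H b₂ = 1 ∧ StrictMonoOn H (Set.Icc b₁ b₂) := by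
  intro Θ Δ H
  have hσ2 : 0 < σ ^ 2 := by positivity
  have hΔΘ : |Δ| < -Θ := by
    simp only [Δ, Θ, neg_div, neg_neg, abs_div, abs_of_pos hσ2]
    exact div_lt_div_of_pos_right (abs_lt_sqrt_sq_add (by positivity)) hσ2
  have hS : sinh (Θ * (b₂ - b₁)) < 0 :=
    sinh_neg_iff.mpr (mul_neg_of_neg_of_pos (by linarith [abs_nonneg Δ]) (sub_pos.mpr hb))
  refine ⟨by simp [H, hS.ne], by simp [H], fun x _ y _ hxy => ?_⟩
  have := div_lt_div_of_neg_of_lt hS (strictMono_exp_mul_sinh hΔΘ b₁ b₂ hxy)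
  simp only [H, mul_div_assoc'] at this ⊢
  linarith
end

section
/- Let V : (α, β) → ℝ be concave, let z ∈ (α, β), and let g₊, g₋ : (0,ε) → ℝ be functions with g±(h) → 1/2 as h → 0⁺. If g₋(h)[V(z) − V(z−h)] = g₊(h)[V(z+h) − V(z)] + o(h) as h → 0⁺, then the left and right derivatives of V at z coincide, i.e. V is differentiable at z. -/
/-!
A concave function has one-sided derivatives `V'₋(z)`, `V'₊(z)` at an interior point. Dividing
the balance relation by `h` and letting `h → 0⁺`, the difference quotients converge to these
one-sided derivatives while both weights converge to `1/2`, so `V'₋(z)/2 - V'₊(z)/2 = 0`.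
-/

open Asymptotics Topology Filter Set

lemma tendsto_add_left_nhdsGT_zero (x : ℝ) :
    Tendsto (fun h : ℝ => x + h) (𝓝[>] 0) (𝓝[>] x) :=
  tendsto_nhdsWithin_iff.2
    ⟨((continuous_const_add x).tendsto' 0 x (add_zero x)).mono_left nhdsWithin_le_nhds,
      eventually_nhdsWithin_of_forall fun _ hh => lt_add_of_pos_right x hh⟩

lemma tendsto_sub_left_nhdsGT_zero (x : ℝ) :
    Tendsto (fun h : ℝ => x - h) (𝓝[>] 0) (𝓝[<] x) :=
  tendsto_nhdsWithin_iff.2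
    ⟨((continuous_sub_left x).tendsto' 0 x (sub_zero x)).mono_left nhdsWithin_le_nhds,
      eventually_nhdsWithin_of_forall fun _ hh => sub_lt_self x hh⟩

lemma ConcaveOn.differentiableWithinAt_Ioi_of_mem_interior {S : Set ℝ} {f : ℝ → ℝ} {x : ℝ}
    (hf : ConcaveOn ℝ S f) (hx : x ∈ interior S) : DifferentiableWithinAt ℝ f (Ioi x) x := by
  simpa using hf.neg.differentiableWithinAt_Ioi_of_mem_interior hx

lemma ConcaveOn.differentiableWithinAt_Iio_of_mem_interior {S : Set ℝ} {f : ℝ → ℝ} {x : ℝ}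
    (hf : ConcaveOn ℝ S f) (hx : x ∈ interior S) : DifferentiableWithinAt ℝ f (Iio x) x := by
  simpa using hf.neg.differentiableWithinAt_Iio_of_mem_interior hx

section OneSided

variable {f : ℝ → ℝ} {x a b : ℝ}

lemma HasDerivWithinAt.tendsto_div_right (hf : HasDerivWithinAt f a (Ioi x) x) :
    Tendsto (fun h => (f (x + h) - f x) / h) (𝓝[>] 0) (𝓝 a) := by
  refine ((hasDerivWithinAt_iff_tendsto_slope' self_notMem_Ioi).1 hf).comp
    (tendsto_add_left_nhdsGT_zero x) |>.congr fun h => ?_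
  simp [slope_def_field, div_eq_inv_mul]

lemma HasDerivWithinAt.tendsto_div_left (hf : HasDerivWithinAt f a (Iio x) x) :
    Tendsto (fun h => (f x - f (x - h)) / h) (𝓝[>] 0) (𝓝 a) := by
  refine ((hasDerivWithinAt_iff_tendsto_slope' self_notMem_Iio).1 hf).comp
    (tendsto_sub_left_nhdsGT_zero x) |>.congr fun h => ?_
  simp only [Function.comp_apply, slope_def_field]
  rw [← neg_div_neg_eq]
  ring_nf

lemma hasDerivAt_of_hasDerivWithinAt_Iio_Ioi (hl : HasDerivWithinAt f a (Iio x) x)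
    (hr : HasDerivWithinAt f a (Ioi x) x) : HasDerivAt f a x := by
  simpa [Iic_union_Ici] using hl.Iic_of_Iio.union hr.Ici_of_Ioi

lemma hasDerivAt_of_isLittleO_balance {gp gm : ℝ → ℝ} {c : ℝ}
    (hl : HasDerivWithinAt f b (Iio x) x) (hr : HasDerivWithinAt f a (Ioi x) x) (hc : c ≠ 0)
    (hgp : Tendsto gp (𝓝[>] 0) (𝓝 c)) (hgm : Tendsto gm (𝓝[>] 0) (𝓝 c))
    (hbal : (fun h => gm h * (f x - f (x - h)) - gp h * (f (x + h) - f x))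
      =o[𝓝[>] 0] fun h => h) :
    HasDerivAt f a x := by
  have hlim : Tendsto (fun h => gm h * ((f x - f (x - h)) / h) - gp h * ((f (x + h) - f x) / h))
      (𝓝[>] 0) (𝓝 (c * b - c * a)) :=
    (hgm.mul hl.tendsto_div_left).sub (hgp.mul hr.tendsto_div_right)
  have hzero : Tendsto (fun h => gm h * ((f x - f (x - h)) / h) - gp h * ((f (x + h) - f x) / h))
      (𝓝[>] 0) (𝓝 0) :=
    hbal.tendsto_div_nhds_zero.congr fun h => by ring
  have hba : b = a :=
    mul_left_cancel₀ hc (sub_eq_zero.1 (tendsto_nhds_unique hlim hzero))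
  exact hasDerivAt_of_hasDerivWithinAt_Iio_Ioi (hba ▸ hl) hr

end OneSided

theorem concave_differentiable_of_balance (α β z : ℝ) (V : ℝ → ℝ)
    (hz : z ∈ Set.Ioo α β)
    (hconc : ConcaveOn ℝ (Set.Ioo α β) V)
    (gp gm : ℝ → ℝ)
    (hgp : Filter.Tendsto gp (𝓝[>] 0) (𝓝 (1/2)))
    (hgm : Filter.Tendsto gm (𝓝[>] 0) (𝓝 (1/2)))
    (hbal : (fun h : ℝ => gm h * (V z - V (z - h)) - gp h * (V (z + h) - V z))
      =o[𝓝[>] 0] fun h : ℝ => h) :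
    DifferentiableAt ℝ V z := by
  rw [← interior_Ioo] at hz
  have hl := (hconc.differentiableWithinAt_Iio_of_mem_interior hz).hasDerivWithinAt
  have hr := (hconc.differentiableWithinAt_Ioi_of_mem_interior hz).hasDerivWithinAt
  exact (hasDerivAt_of_isLittleO_balance hl hr (by norm_num) hgp hgm hbal).differentiableAt
end

section
/- Let V : (α, β) → ℝ be differentiable with continuous derivative, and suppose the symmetric second difference quotient ψ(z) = lim_{h→0} (V(z+h) − 2V(z) + V(z−h))/h² exists for every z ∈ (α, β) and ψ is continuous. Then V is twice differentiable on (α, β) with V'' = ψ. -/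
/-!
Let `Φ` be a double antiderivative of `ψ`. By l'Hôpital's rule the symmetric second derivative
of `Φ` is `Φ'' = ψ`, so `W = V - Φ` is continuous with vanishing symmetric second derivative.
Such a function is affine (Schwarz): at an interior maximum a symmetric second derivative is
`≤ 0`, so `W - chord + ε (x - a) (x - b)`, whose symmetric second derivative is `2ε > 0`, is
maximal at an endpoint; letting `ε → 0` for `W` and `-W` traps `W` on its chord. Hence
`V' = Φ' + const`, which has derivative `ψ`.
-/

open Topology Filter Set

def HasSymmSecondDerivAt (f : ℝ → ℝ) (c z : ℝ) : Prop :=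
  Tendsto (fun h => (f (z + h) - 2 * f z + f (z - h)) / h ^ 2) (𝓝[≠] 0) (𝓝 c)

namespace HasSymmSecondDerivAt

variable {f g : ℝ → ℝ} {c d z : ℝ}

theorem neg (hf : HasSymmSecondDerivAt f c z) : HasSymmSecondDerivAt (fun x => -f x) (-c) z :=
  (Tendsto.neg hf).congr fun h => by ring

theorem add (hf : HasSymmSecondDerivAt f c z) (hg : HasSymmSecondDerivAt g d z) :
    HasSymmSecondDerivAt (fun x => f x + g x) (c + d) z :=
  (Tendsto.add hf hg).congr fun h => by ring

theorem sub (hf : HasSymmSecondDerivAt f c z) (hg : HasSymmSecondDerivAt g d z) :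
    HasSymmSecondDerivAt (fun x => f x - g x) (c - d) z :=
  (Tendsto.sub hf hg).congr fun h => by ring

theorem nonpos_of_isLocalMax (hf : HasSymmSecondDerivAt f c z) (hmax : IsLocalMax f z) :
    c ≤ 0 := by
  have hplus : ∀ᶠ h in 𝓝 (0 : ℝ), f (z + h) ≤ f z :=
    (continuous_const_add z).tendsto' 0 z (add_zero z) |>.eventually hmax
  have hminus : ∀ᶠ h in 𝓝 (0 : ℝ), f (z - h) ≤ f z :=
    (continuous_sub_left z).tendsto' 0 z (sub_zero z) |>.eventually hmax
  refine le_of_tendsto hf (eventually_nhdsWithin_of_eventually_nhds ?_)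
  filter_upwards [hplus, hminus] with h hp hm
  exact div_nonpos_of_nonpos_of_nonneg (by linarith) (sq_nonneg h)

end HasSymmSecondDerivAt

theorem hasSymmSecondDerivAt_const_add_mul_sub (k m x₀ z : ℝ) :
    HasSymmSecondDerivAt (fun x => k + m * (x - x₀)) 0 z :=
  tendsto_const_nhds.congr fun h => by ring

theorem hasSymmSecondDerivAt_mul_sub_mul_sub (ε a b z : ℝ) :
    HasSymmSecondDerivAt (fun x => ε * ((x - a) * (x - b))) (2 * ε) z := by
  refine tendsto_const_nhds.congr' ?_
  filter_upwards [self_mem_nhdsWithin] with h (hh : h ≠ 0)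
  field_simp
  ring

theorem HasDerivAt.tendsto_symmetric_slope {f : ℝ → ℝ} {c z : ℝ} (hf : HasDerivAt f c z) :
    Tendsto (fun h => (f (z + h) - f (z - h)) / (2 * h)) (𝓝[≠] 0) (𝓝 c) := by
  have hsymm : HasDerivAt (fun h => f (z + h) - f (z - h)) (c - -c) 0 :=
    (HasDerivAt.comp_const_add z 0 (by rwa [add_zero])).sub
      (HasDerivAt.comp_const_sub z 0 (by rwa [sub_zero]))
  have := (hasDerivAt_iff_tendsto_slope_zero.mp hsymm).div_const 2
  convert this using 2 with h
  · simp only [zero_add, add_zero, sub_zero, sub_self, smul_eq_mul]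
    ring
  · ring

theorem hasSymmSecondDerivAt_of_hasDerivAt {f f' : ℝ → ℝ} {c z : ℝ}
    (hf : ∀ᶠ x in 𝓝 z, HasDerivAt f (f' x) x) (hf' : HasDerivAt f' c z) :
    HasSymmSecondDerivAt f c z := by
  have hshift : ∀ᶠ h in 𝓝 (0 : ℝ),
      HasDerivAt f (f' (z + h)) (z + h) ∧ HasDerivAt f (f' (z - h)) (z - h) :=
    ((continuous_const_add z).tendsto' 0 z (add_zero z) |>.eventually hf).and
      ((continuous_sub_left z).tendsto' 0 z (sub_zero z) |>.eventually hf)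
  have hnum : ∀ᶠ h in 𝓝 (0 : ℝ), HasDerivAt (fun h => f (z + h) - 2 * f z + f (z - h))
      (f' (z + h) - f' (z - h)) h := by
    filter_upwards [hshift] with h ⟨hplus, hminus⟩
    exact (((HasDerivAt.comp_const_add z h hplus).sub_const (2 * f z)).add
      (HasDerivAt.comp_const_sub z h hminus)).congr_deriv (sub_eq_add_neg _ _).symm
  have hnum_zero : Tendsto (fun h => f (z + h) - 2 * f z + f (z - h)) (𝓝[≠] 0) (𝓝 0) := by
    convert hnum.self_of_nhds.continuousAt.tendsto.mono_left nhdsWithin_le_nhds using 2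
    simp only [add_zero, sub_zero]
    ring
  have hsq_zero : Tendsto (fun h : ℝ => h ^ 2) (𝓝[≠] 0) (𝓝 0) :=
    ((continuous_pow 2).tendsto' 0 0 (zero_pow two_ne_zero)).mono_left nhdsWithin_le_nhds
  refine HasDerivAt.lhopital_zero_nhdsNE (g' := fun h => 2 * h)
    (eventually_nhdsWithin_of_eventually_nhds hnum)
    (Eventually.of_forall fun h => by simpa using hasDerivAt_pow 2 h) ?_ hnum_zero hsq_zero
    hf'.tendsto_symmetric_slope
  filter_upwards [self_mem_nhdsWithin] with h (hh : h ≠ 0)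
  exact mul_ne_zero two_ne_zero hh

theorem le_max_of_hasSymmSecondDerivAt_pos {f c : ℝ → ℝ} {a b : ℝ}
    (hf : ContinuousOn f (Icc a b)) (hc : ∀ z ∈ Ioo a b, 0 < c z)
    (hfc : ∀ z ∈ Ioo a b, HasSymmSecondDerivAt f (c z) z) :
    ∀ x ∈ Icc a b, f x ≤ max (f a) (f b) := by
  intro x hx
  obtain ⟨x₀, hx₀, hmax⟩ := isCompact_Icc.exists_isMaxOn ⟨x, hx⟩ hf
  refine (hmax hx).trans ?_
  rcases eq_endpoints_or_mem_Ioo_of_mem_Icc hx₀ with rfl | rfl | hx₀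
  · exact le_max_left _ _
  · exact le_max_right _ _
  · have hlocal : IsLocalMax f x₀ := hmax.isLocalMax (Icc_mem_nhds hx₀.1 hx₀.2)
    exact absurd ((hfc x₀ hx₀).nonpos_of_isLocalMax hlocal) (hc x₀ hx₀).not_ge

theorem le_chord_of_hasSymmSecondDerivAt_nonneg {f c : ℝ → ℝ} {a b : ℝ}
    (hf : ContinuousOn f (Icc a b)) (hc : ∀ z ∈ Ioo a b, 0 ≤ c z)
    (hfc : ∀ z ∈ Ioo a b, HasSymmSecondDerivAt f (c z) z) :
    ∀ x ∈ Icc a b, f x ≤ f a + slope f a b * (x - a) := by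
  intro x hx
  have hchord : slope f a b * (b - a) = f b - f a := by
    simpa only [smul_eq_mul, vsub_eq_sub, mul_comm] using sub_smul_slope f a b
  have hperturbed : ∀ ε > 0, f x - (f a + slope f a b * (x - a)) ≤ ε * ((x - a) * (b - x)) := by
    intro ε hε
    let u y := f y - (f a + slope f a b * (y - a)) + ε * ((y - a) * (y - b))
    have hu : ContinuousOn u (Icc a b) := by fun_prop
    have hu_max := le_max_of_hasSymmSecondDerivAt_pos (c := fun z => c z - 0 + 2 * ε) hu
      (fun z hz => by linarith [hc z hz])
      (fun z hz => ((hfc z hz).sub (hasSymmSecondDerivAt_const_add_mul_sub _ _ _ _)).add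
        (hasSymmSecondDerivAt_mul_sub_mul_sub _ _ _ _)) x hx
    have hua : u a = 0 := by simp [u]
    have hub : u b = 0 := by simp only [u]; linarith
    rw [hua, hub, max_self] at hu_max
    simp only [u] at hu_max
    linarith
  have hlim : Tendsto (fun ε => ε * ((x - a) * (b - x))) (𝓝[>] 0) (𝓝 0) :=
    ((continuous_mul_const _).tendsto' 0 0 (zero_mul _)).mono_left nhdsWithin_le_nhds
  linarith [ge_of_tendsto hlim (eventually_nhdsWithin_of_forall hperturbed)]

theorem eq_chord_of_hasSymmSecondDerivAt_zero {f : ℝ → ℝ} {a b : ℝ}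
    (hf : ContinuousOn f (Icc a b)) (hf0 : ∀ z ∈ Ioo a b, HasSymmSecondDerivAt f 0 z) :
    ∀ x ∈ Icc a b, f x = f a + slope f a b * (x - a) := by
  intro x hx
  have hle := le_chord_of_hasSymmSecondDerivAt_nonneg hf (fun _ _ => le_rfl) hf0 x hx
  have hge := le_chord_of_hasSymmSecondDerivAt_nonneg (f := fun x => -f x) hf.neg
    (fun _ _ => le_rfl) (fun z hz => by simpa using (hf0 z hz).neg) x hx
  rw [slope_neg] at hge
  linarith

theorem hasDerivAt_slope_of_hasSymmSecondDerivAt_zero {f : ℝ → ℝ} {a b : ℝ}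
    (hf : ContinuousOn f (Icc a b)) (hf0 : ∀ z ∈ Ioo a b, HasSymmSecondDerivAt f 0 z) :
    ∀ z ∈ Ioo a b, HasDerivAt f (slope f a b) z := by
  intro z hz
  have hchord : HasDerivAt (fun x => f a + slope f a b * (x - a)) (slope f a b) z := by
    simpa using ((hasDerivAt_id z).sub_const a).const_mul (slope f a b) |>.const_add (f a)
  refine hchord.congr_of_eventuallyEq ?_
  filter_upwards [Ioo_mem_nhds hz.1 hz.2] with x hx
  exact eq_chord_of_hasSymmSecondDerivAt_zero hf hf0 x (Ioo_subset_Icc_self hx)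

theorem ContinuousOn.hasDerivAt_integral_of_mem {E : Type*} [NormedAddCommGroup E]
    [NormedSpace ℝ E] [CompleteSpace E] {f : ℝ → E} {s : Set ℝ} (hf : ContinuousOn f s)
    (hs : IsOpen s) [OrdConnected s] {x₀ x : ℝ} (hx₀ : x₀ ∈ s) (hx : x ∈ s) :
    HasDerivAt (fun y => ∫ t in x₀..y, f t) (f x) x :=
  intervalIntegral.integral_hasDerivAt_right
    (hf.mono (OrdConnected.uIcc_subset ‹_› hx₀ hx)).intervalIntegrable
    (hf.stronglyMeasurableAtFilter hs x hx) (hf.continuousAt (hs.mem_nhds hx))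

theorem schwarz_symmetric_second_derivative_general (α β : ℝ) (V ψ : ℝ → ℝ)
    (hV : DifferentiableOn ℝ V (Set.Ioo α β))
    (hψ : ∀ z ∈ Set.Ioo α β,
      Filter.Tendsto (fun h : ℝ => (V (z + h) - 2 * V z + V (z - h)) / h^2)
        (𝓝[≠] 0) (𝓝 (ψ z)))
    (hψc : ContinuousOn ψ (Set.Ioo α β)) :
    ∀ z ∈ Set.Ioo α β, HasDerivAt (deriv V) (ψ z) z := by
  intro z hz
  set g := fun y => ∫ t in z..y, ψ t
  have hg : ∀ x ∈ Ioo α β, HasDerivAt g (ψ x) x := fun x hx =>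
    hψc.hasDerivAt_integral_of_mem isOpen_Ioo hz hx
  set Φ := fun y => ∫ t in z..y, g t
  have hΦ : ∀ x ∈ Ioo α β, HasDerivAt Φ (g x) x := fun x hx =>
    (HasDerivAt.continuousOn hg).hasDerivAt_integral_of_mem isOpen_Ioo hz hx
  obtain ⟨a, b, -, hab_nhds, hab⟩ := exists_Icc_mem_subset_of_mem_nhds (isOpen_Ioo.mem_nhds hz)
  have hW : ∀ x ∈ Ioo a b, HasDerivAt (V - Φ) (slope (V - Φ) a b) x :=
    hasDerivAt_slope_of_hasSymmSecondDerivAt_zero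
      ((hV.continuousOn.sub (HasDerivAt.continuousOn hΦ)).mono hab) fun x hx => by
        have hx' := hab (Ioo_subset_Icc_self hx)
        have hdiff := HasSymmSecondDerivAt.sub (hψ x hx') (hasSymmSecondDerivAt_of_hasDerivAt
          (eventually_of_mem (isOpen_Ioo.mem_nhds hx') hΦ) (hg x hx'))
        rwa [sub_self] at hdiff
  have hderiv : ∀ x ∈ Ioo a b, deriv V x = slope (V - Φ) a b + g x := fun x hx => by
    have hsum := (hW x hx).add (hΦ x (hab (Ioo_subset_Icc_self hx)))
    rw [sub_add_cancel] at hsum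
    exact hsum.deriv
  have hzab : z ∈ Ioo a b := by
    rw [← interior_Icc]
    exact mem_interior_iff_mem_nhds.2 hab_nhds
  refine ((hg z hz).const_add (slope (V - Φ) a b)).congr_of_eventuallyEq ?_
  filter_upwards [Ioo_mem_nhds hzab.1 hzab.2] with x hx using hderiv x hx

theorem schwarz_symmetric_second_derivative (α β : ℝ) (V ψ : ℝ → ℝ)
    (hV : DifferentiableOn ℝ V (Set.Ioo α β))
    (hV' : ContinuousOn (deriv V) (Set.Ioo α β))
    (hψ : ∀ z ∈ Set.Ioo α β,
      Filter.Tendsto (fun h : ℝ => (V (z + h) - 2 * V z + V (z - h)) / h^2)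
        (𝓝[≠] 0) (𝓝 (ψ z)))
    (hψc : ContinuousOn ψ (Set.Ioo α β)) :
    ∀ z ∈ Set.Ioo α β, HasDerivAt (deriv V) (ψ z) z :=
  schwarz_symmetric_second_derivative_general α β V ψ hV hψ hψc
end
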